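/- Let H be an atomic monoid and u ∈ A(H) an atom. Then the tame degree satisfies t(H, uH^×) = sup{ d(x, Z(a) ∩ uH^×Z(H)) : a ∈ uH, x ∈ Z(a), A_a(M_H) ≠ ∅ }. -/

import Mathlib

open Multiset
open scoped Classical ENNReal

/-- The set of atoms (irreducible elements) of a reduced monoid `M`. -/
abbrev Atom (M : Type) [CancelCommMonoid M] : Type := {u : M // Irreducible u}

/-- The factorization homomorphism `π : Z(H) → H`, where the factorization monoid
`Z(H)` is realized as the free commutative monoid (multiset) over the atoms. -/
def fprod {M : Type} [CancelCommMonoid M] (z : Multiset (Atom M)) : M :=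
  (z.map Subtype.val).prod

/-- The set of factorizations `Z(a)` of `a`. -/
def Zf {M : Type} [CancelCommMonoid M] (a : M) : Set (Multiset (Atom M)) :=
  {z | fprod z = a}

/-- `M` is reduced: the only unit is `1`. -/
def Reduced (M : Type) [CancelCommMonoid M] : Prop := ∀ u : M, IsUnit u → u = 1

/-- `M` is atomic: every non-unit is a product of atoms. -/
def Atomic (M : Type) [CancelCommMonoid M] : Prop :=
  ∀ a : M, ¬ IsUnit a → ∃ z : Multiset (Atom M), fprod z = a

/-- The distance between two factorizations. -/
noncomputable def fdist {M : Type} [CancelCommMonoid M] (z z' : Multiset (Atom M)) : ℕ :=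
  max (card (z - z')) (card (z' - z))

/-- The catenary degree `c(a)`: the least `N` such that any two factorizations of `a`
can be concatenated by an `N`-chain of factorizations of `a`. -/
noncomputable def cat {M : Type} [CancelCommMonoid M] (a : M) : ℕ∞ :=
  sInf {N : ℕ∞ | ∀ z ∈ Zf a, ∀ z' ∈ Zf a,
    Relation.ReflTransGen (fun u v => v ∈ Zf a ∧ (fdist u v : ℕ∞) ≤ N) z z'}

/-- The catenary degree `c(H)`. -/
noncomputable def catH (M : Type) [CancelCommMonoid M] : ℕ∞ := ⨆ a : M, cat a

/-- The `R`-relation on factorizations of `a`: two factorizations are `R`-related if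
they can be joined by a chain of factorizations of `a` whose consecutive members have a
common atom (the degenerate case `z = z' = 1` is the reflexivity case). -/
def RRel {M : Type} [CancelCommMonoid M] (a : M) :
    Multiset (Atom M) → Multiset (Atom M) → Prop :=
  Relation.ReflTransGen (fun u v => u ∈ Zf a ∧ v ∈ Zf a ∧ u ∩ v ≠ 0)

/-- `|R_a| ≥ 2`: `a` has at least two `R`-equivalence classes of factorizations. -/
def TwoClasses {M : Type} [CancelCommMonoid M] (a : M) : Prop :=
  ∃ z ∈ Zf a, ∃ z' ∈ Zf a, ¬ RRel a z z'

/-- `μ(a)`: the supremum over the `R`-classes `ρ` of `Z(a)` of `min {|z| : z ∈ ρ}`. -/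
noncomputable def mu {M : Type} [CancelCommMonoid M] (a : M) : ℕ∞ :=
  ⨆ z ∈ Zf a, ⨅ w ∈ {w | w ∈ Zf a ∧ RRel a z w}, (card w : ℕ∞)

/-- `μ(H) = sup {μ(a) : a ∈ H, |R_a| ≥ 2}`. -/
noncomputable def muH (M : Type) [CancelCommMonoid M] : ℕ∞ :=
  ⨆ a : M, ⨆ (_ : TwoClasses a), mu a

/-- The monoid of relations `M_H ⊆ Z(H) × Z(H)`. -/
def MHset (M : Type) [CancelCommMonoid M] :
    Set (Multiset (Atom M) × Multiset (Atom M)) :=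
  {p | fprod p.1 = fprod p.2}

/-- Atoms of the (reduced) monoid of relations `M_H`. -/
def IsRelAtom {M : Type} [CancelCommMonoid M]
    (p : Multiset (Atom M) × Multiset (Atom M)) : Prop :=
  p ∈ MHset M ∧ p ≠ 0 ∧
    ∀ q r, q ∈ MHset M → r ∈ MHset M → p = q + r → q = 0 ∨ r = 0

/-- `A_a(M_H) ≠ ∅`: there is an atom of `M_H` over `a`. -/
def HasRelAtom {M : Type} [CancelCommMonoid M] (a : M) : Prop :=
  ∃ p : Multiset (Atom M) × Multiset (Atom M), IsRelAtom p ∧ fprod p.1 = a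

/-- The tame degree `t(a, u)` with respect to an atom `u`: the least `N` such that
whenever `a` has a factorization divisible by `u`, every factorization `z` of `a` admits
a factorization `z'` of `a` divisible by `u` with `d(z, z') ≤ N`. -/
noncomputable def tame {M : Type} [CancelCommMonoid M] (a : M) (u : Atom M) : ℕ∞ :=
  sInf {N : ℕ∞ | (∃ z ∈ Zf a, u ∈ z) →
    ∀ z ∈ Zf a, ∃ z' ∈ Zf a, u ∈ z' ∧ (fdist z z' : ℕ∞) ≤ N}

/-! If a factorization `z` of `a` avoids the atom `u` while another factorization `z₀`
contains it, split the relation `(z, z₀)` into atoms of `M_H`: one of them, `(x, y)`, has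
`u ∈ y` and `x ≤ z`, and `π(x) ∈ uH` carries the relation atom `(x, y)`. Replacing `x` inside
`z` by a nearest factorization of `π(x)` containing `u` moves `z` by at most
`d(x, Z(π(x)) ∩ uZ(H))`, a term of the right-hand side. Conversely, every term
`d(z, Z(a) ∩ uZ(H))` with `a ∈ uH` is bounded by `t(a, u)`, since `Z(a) ∩ uZ(H) ≠ ∅`. -/

section Factorizations

variable {M : Type} [CancelCommMonoid M]

/-- `d(z, Y)`; it is `⊤` when `Y = ∅`. -/
noncomputable def fdistSet (z : Multiset (Atom M)) (Y : Set (Multiset (Atom M))) : ℕ∞ :=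
  ⨅ y ∈ Y, (fdist z y : ℕ∞)

lemma fprod_add (x y : Multiset (Atom M)) : fprod (x + y) = fprod x * fprod y := by
  simp [fprod]

lemma fprod_cons (v : Atom M) (x : Multiset (Atom M)) : fprod (v ::ₘ x) = v.1 * fprod x := by
  simp [fprod]

lemma fdist_self (z : Multiset (Atom M)) : fdist z z = 0 := by
  simp [fdist]

lemma fdist_add_left (w x y : Multiset (Atom M)) : fdist (w + x) (w + y) = fdist x y := by
  simp only [fdist, add_tsub_add_eq_tsub_left]

lemma exists_fdist_le_fdistSet (z : Multiset (Atom M)) {Y : Set (Multiset (Atom M))}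
    (hY : Y.Nonempty) : ∃ y ∈ Y, (fdist z y : ℕ∞) ≤ fdistSet z Y :=
  ⟨Function.argminOn (fdist z) Y hY, Function.argminOn_mem _ _ hY,
    le_iInf₂ fun _ hw => Nat.cast_le.2 (Function.argminOn_le _ _ hw)⟩

lemma exists_mem_Zf_of_eq_mul (hred : Reduced M) (hat : Atomic M) {u : Atom M} {a b : M}
    (hab : a = u.1 * b) : ∃ z ∈ Zf a, u ∈ z := by
  by_cases hb : IsUnit b
  · exact ⟨{u}, by simp [Zf, fprod, hab, hred b hb], mem_singleton_self u⟩
  · obtain ⟨w, hw⟩ := hat b hb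
    exact ⟨u ::ₘ w, show fprod _ = a by rw [fprod_cons, hw, hab], mem_cons_self u w⟩

end Factorizations

lemma card_add_card_lt_add {α : Type*} {q r : Multiset α × Multiset α} (hr : r ≠ 0) :
    card q.1 + card q.2 < card (q + r).1 + card (q + r).2 := by
  have hr' : r.1 ≠ 0 ∨ r.2 ≠ 0 := by
    by_contra! h
    exact hr (Prod.ext h.1 h.2)
  simp only [Prod.fst_add, Prod.snd_add, card_add]
  rcases hr' with h | h <;> have := card_pos.2 h <;> omega

section Relations

variable {M : Type} [CancelCommMonoid M]

lemma exists_isRelAtom_of_mem_snd {u : Atom M} {p : Multiset (Atom M) × Multiset (Atom M)}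
    (hp : p ∈ MHset M) (hu : u ∈ p.2) : ∃ q, IsRelAtom q ∧ q.1 ≤ p.1 ∧ u ∈ q.2 := by
  induction hn : card p.1 + card p.2 using Nat.strong_induction_on generalizing p with
  | _ n ih =>
  have hp0 : p ≠ 0 := fun h => by simp [h] at hu
  by_cases hatom : IsRelAtom p
  · exact ⟨p, hatom, le_rfl, hu⟩
  obtain ⟨q, r, hq, hr, rfl, hq0, hr0⟩ :
      ∃ q r, q ∈ MHset M ∧ r ∈ MHset M ∧ p = q + r ∧ q ≠ 0 ∧ r ≠ 0 := by
    simpa [IsRelAtom, hp, hp0] using hatom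
  rcases mem_add.1 hu with huq | hur
  · obtain ⟨s, hs, hsq, hus⟩ := ih _ (hn ▸ card_add_card_lt_add hr0) hq huq rfl
    exact ⟨s, hs, hsq.trans (le_add_right le_rfl), hus⟩
  · obtain ⟨s, hs, hsr, hus⟩ :=
      ih _ (hn ▸ add_comm q r ▸ card_add_card_lt_add hq0) hr hur rfl
    exact ⟨s, hs, hsr.trans (le_add_left le_rfl), hus⟩

end Relations

noncomputable def tameSup (M : Type) [CancelCommMonoid M] (u : Atom M) : ℕ∞ :=
  ⨆ a : M, ⨆ (_ : (∃ b : M, a = u.1 * b) ∧ HasRelAtom a),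
    ⨆ z ∈ Zf a, fdistSet z {w | w ∈ Zf a ∧ u ∈ w}

section Tame

variable {M : Type} [CancelCommMonoid M]

lemma fdistSet_le_tameSup {u : Atom M} {q : Multiset (Atom M) × Multiset (Atom M)}
    (hq : IsRelAtom q) (hu : u ∈ q.2) :
    fdistSet q.1 {w | w ∈ Zf (fprod q.1) ∧ u ∈ w} ≤ tameSup M u := by
  have hdvd : fprod q.1 = u.1 * fprod (q.2.erase u) := by
    rw [hq.1, ← fprod_cons, cons_erase hu]
  refine le_iSup_of_le (fprod q.1) (le_iSup_of_le ⟨⟨_, hdvd⟩, q, hq, rfl⟩ ?_)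
  exact le_iSup₂ (f := fun z (_ : z ∈ Zf (fprod q.1)) =>
    fdistSet z {w | w ∈ Zf (fprod q.1) ∧ u ∈ w}) q.1 rfl

lemma exists_mem_Zf_fdist_le_fdistSet {a : M} {u : Atom M} {z : Multiset (Atom M)}
    (hz : z ∈ Zf a) {q : Multiset (Atom M) × Multiset (Atom M)} (hq : q ∈ MHset M)
    (hqz : q.1 ≤ z) (hu : u ∈ q.2) :
    ∃ z' ∈ Zf a, u ∈ z' ∧
      (fdist z z' : ℕ∞) ≤ fdistSet q.1 {w | w ∈ Zf (fprod q.1) ∧ u ∈ w} := by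
  obtain ⟨v, ⟨hv, huv⟩, hvd⟩ := exists_fdist_le_fdistSet q.1
    (Y := {w | w ∈ Zf (fprod q.1) ∧ u ∈ w}) ⟨q.2, hq.symm, hu⟩
  have hz_eq : z - q.1 + q.1 = z := tsub_add_cancel_of_le hqz
  refine ⟨z - q.1 + v, ?_, mem_add.2 (Or.inr huv), ?_⟩
  · show fprod _ = a
    rw [fprod_add, hv, ← fprod_add, hz_eq]
    exact hz
  · rwa [← hz_eq, add_tsub_cancel_right, fdist_add_left]

lemma tame_le_tameSup (a : M) (u : Atom M) : tame a u ≤ tameSup M u := by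
  refine sInf_le fun ⟨z₀, hz₀, hu₀⟩ z hz => ?_
  by_cases huz : u ∈ z
  · exact ⟨z, hz, huz, by simp [fdist_self]⟩
  have hrel : (z, z₀) ∈ MHset M := hz.trans hz₀.symm
  obtain ⟨q, hq, hqz, huq⟩ := exists_isRelAtom_of_mem_snd hrel hu₀
  obtain ⟨z', hz', hu', hd⟩ := exists_mem_Zf_fdist_le_fdistSet hz hq.1 hqz huq
  exact ⟨z', hz', hu', hd.trans (fdistSet_le_tameSup hq huq)⟩

lemma fdistSet_le_tame {a : M} {u : Atom M} (hu : ∃ z₀ ∈ Zf a, u ∈ z₀)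
    {z : Multiset (Atom M)} (hz : z ∈ Zf a) :
    fdistSet z {w | w ∈ Zf a ∧ u ∈ w} ≤ tame a u :=
  le_sInf fun _ hN =>
    let ⟨z', hz', hu', hd⟩ := hN hu z hz
    (iInf₂_le z' ⟨hz', hu'⟩).trans hd

end Tame

/-- **Theorem 4.10.1.** For an atom `u` of `H`,
`t(H, u) = sup {d(x, Z(a) ∩ uZ(H)) : a ∈ uH, x ∈ Z(a), A_a(M_H) ≠ ∅}`. -/
theorem tame_eq_sup (M : Type) [CancelCommMonoid M]
    (hred : Reduced M) (hat : Atomic M) (u : Atom M) :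
    (⨆ a : M, tame a u) =
      ⨆ a : M, ⨆ (_ : (∃ b : M, a = u.1 * b) ∧ HasRelAtom a),
        ⨆ z ∈ Zf a, ⨅ z' ∈ {w | w ∈ Zf a ∧ u ∈ w}, (fdist z z' : ℕ∞) := by
  refine le_antisymm (iSup_le fun a => tame_le_tameSup a u) ?_
  refine iSup_le fun a => iSup_le fun ⟨⟨b, hab⟩, _⟩ => iSup₂_le fun z hz => ?_
  exact (fdistSet_le_tame (exists_mem_Zf_of_eq_mul hred hat hab) hz).trans
    (le_iSup (fun a => tame a u) a)
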